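/- In the d-dimensional lattice graph, fix t and p ∈ L_t not connected to K_{t+1}^+ (or p ∈ K_t^−). Then there exists u ∈ 𝒰^{(t)} with u_p ≠ 0; consequently span{ J_p^u : u ∈ 𝒰^{(t)} } = span{ 1_{ℰ(p)} }, where 1_{ℰ(p)} ∈ ℝ^{E_t} is the indicator of the edges of E_t incident to p. -/

import Mathlib

noncomputable section
open Classical Finset

namespace DiscreteCalderon

/-- Vertices of the ambient lattice `ℤ^d`. -/
abbrev V (d : ℕ) := Fin d → ℤ

/-- Interior vertex set `D = {x : 1 ≤ x_i ≤ n}`. -/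
def Dset (d n : ℕ) : Set (V d) := {x | ∀ i, 1 ≤ x i ∧ x i ≤ (n : ℤ)}

/-- ℓ¹ distance. -/
def dist1 {d : ℕ} (p q : V d) : ℤ := ∑ i, |p i - q i|

/-- Boundary vertex set `∂D`: vertices at ℓ¹ distance 1 from `D`. -/
def Bset (d n : ℕ) : Set (V d) := {p | p ∉ Dset d n ∧ ∃ q ∈ Dset d n, dist1 p q = 1}

/-- All vertices of the graph, `D ∪ ∂D`. -/
def Vset (d n : ℕ) : Set (V d) := Dset d n ∪ Bset d n

/-- Adjacency of the lattice graph: ℓ¹ distance 1, both endpoints vertices,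
not both on the boundary. -/
def Adj (d n : ℕ) (p q : V d) : Prop :=
  dist1 p q = 1 ∧ p ∈ Vset d n ∧ q ∈ Vset d n ∧ (p ∈ Dset d n ∨ q ∈ Dset d n)

/-- A finite box containing all vertices. -/
def box (d n : ℕ) : Finset (V d) :=
  Fintype.piFinset (fun _ : Fin d => Finset.Icc (0 : ℤ) ((n : ℤ) + 1))

/-- Neighbours of `p` in the graph, as a finite set. -/
def nbr (d n : ℕ) (p : V d) : Finset (V d) := (box d n).filter (fun q => Adj d n p q)

/-- Interior neighbours of `p`. -/
def nbrD (d n : ℕ) (p : V d) : Finset (V d) := (nbr d n p).filter (fun q => q ∈ Dset d n)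

/-- The discrete (weighted) Laplacian `(Δ_γ u)_p = ∑_{q∈N(p)} γ_{qp}(u_q - u_p)`. -/
def lap (d n : ℕ) (γ : V d → V d → ℝ) (u : V d → ℝ) (p : V d) : ℝ :=
  ∑ q ∈ nbr d n p, γ q p * (u q - u p)

/-- The boundary current `(D_γ u)_p = ∑_{q∈N(p)∩D} γ_{pq}(u_q - u_p)`
(there is exactly one interior neighbour of a boundary node). -/
def cur (d n : ℕ) (γ : V d → V d → ℝ) (u : V d → ℝ) (p : V d) : ℝ :=
  ∑ q ∈ nbrD d n p, γ p q * (u q - u p)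

/-- A strictly positive symmetric conductivity. -/
def GoodCond (d n : ℕ) (γ : V d → V d → ℝ) : Prop :=
  (∀ p q, γ p q = γ q p) ∧ ∀ p q, Adj d n p q → 0 < γ p q

/-- The coordinate sum of a lattice point. -/
def sum1 {d : ℕ} (x : V d) : ℤ := ∑ i, x i

/-- Interior diagonal slice `L_t`. -/
def L (d n : ℕ) (t : ℤ) : Set (V d) := {x | x ∈ Dset d n ∧ sum1 x = t}

/-- `L_t^S = ∪_{ℓ ≤ t} L_ℓ`. -/
def LS (d n : ℕ) (t : ℤ) : Set (V d) := {x | x ∈ Dset d n ∧ sum1 x ≤ t}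

/-- Boundary diagonal slice `K_t`. -/
def K (d n : ℕ) (t : ℤ) : Set (V d) := {x | x ∈ Bset d n ∧ sum1 x = t}

/-- `K_t^- = {x ∈ K_t : min_i x_i = 0}`. -/
def Km (d n : ℕ) (t : ℤ) : Set (V d) := {x | x ∈ K d n t ∧ ∃ i, x i = 0}

/-- `K_t^+ = {x ∈ K_t : max_i x_i = n+1}`. -/
def Kp (d n : ℕ) (t : ℤ) : Set (V d) := {x | x ∈ K d n t ∧ ∃ i, x i = (n : ℤ) + 1}

/-- `K_t^{S-} = ∪_{ℓ ≤ t} K_ℓ^-`. -/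
def KSm (d n : ℕ) (t : ℤ) : Set (V d) := {x | x ∈ Bset d n ∧ sum1 x ≤ t ∧ ∃ i, x i = 0}

/-- `K_t^{S+} = ∪_{ℓ ≤ t} K_ℓ^+`. -/
def KSp (d n : ℕ) (t : ℤ) : Set (V d) := {x | x ∈ Bset d n ∧ sum1 x ≤ t ∧ ∃ i, x i = (n : ℤ) + 1}

/-- The lower boundary region `J_t^S = K_t^{S-} ∪ K_{t+1}^{S+}`. -/
def JS (d n : ℕ) (t : ℤ) : Set (V d) := KSm d n t ∪ KSp d n (t + 1)

/-- `J_t = K_t^- ∪ K_{t+1}^+`. -/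
def Jslice (d n : ℕ) (t : ℤ) : Set (V d) := Km d n t ∪ Kp d n (t + 1)

/-- `u` is the γ-harmonic extension of boundary data `φ` (zero-extension convention
outside `D ∪ ∂D`). -/
def IsSol (d n : ℕ) (γ : V d → V d → ℝ) (φ u : V d → ℝ) : Prop :=
  (∀ p, p ∉ Vset d n → u p = 0) ∧
  (∀ p ∈ Dset d n, lap d n γ u p = 0) ∧
  (∀ p ∈ Bset d n, u p = φ p)

/-- The Laplacian row vector `v_p`. -/
def vrow (d n : ℕ) (γ : V d → V d → ℝ) (p : V d) : V d → ℝ := fun q =>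
  if Adj d n p q then γ p q
  else if q = p then -(∑ r ∈ nbr d n p, γ p r) else 0

/-- Restriction of a function to a set (zero outside). -/
def rst {d : ℕ} (S : Set (V d)) (f : V d → ℝ) : V d → ℝ := fun q => if q ∈ S then f q else 0

/-- Euclidean inner product of (vertex-supported) functions. -/
def dot (d n : ℕ) (f g : V d → ℝ) : ℝ := ∑ p ∈ box d n, f p * g p

/-- The localized solution space `𝒰^{(t)}`: restrictions to `L_t^S ∪ J_t^S` of
harmonic extensions of boundary potentials in `ker T₁^{(t)}`. -/
def Uset (d n : ℕ) (γ : V d → V d → ℝ) (t : ℤ) : Set (V d → ℝ) :=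
  {u | (∀ p, p ∉ LS d n t ∪ JS d n t → u p = 0) ∧
    ∃ φ w : V d → ℝ, (∀ p, p ∉ JS d n t → φ p = 0) ∧ IsSol d n γ φ w ∧
      (∀ p ∈ L d n (t + 1), w p = 0) ∧ ∀ p ∈ LS d n t ∪ JS d n t, u p = w p}

/-- The set `E_t` of edges between the consecutive layers:
`E(K_t^-, L_{t+1}) ∪ E(L_t, K_{t+1}^+) ∪ E(L_t, L_{t+1})`. -/
def EdgeT (d n : ℕ) (t : ℤ) (p q : V d) : Prop :=
  Adj d n p q ∧
    ((p ∈ Km d n t ∧ q ∈ L d n (t + 1)) ∨ (q ∈ Km d n t ∧ p ∈ L d n (t + 1)) ∨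
     (p ∈ L d n t ∧ q ∈ Kp d n (t + 1)) ∨ (q ∈ L d n t ∧ p ∈ Kp d n (t + 1)) ∨
     (p ∈ L d n t ∧ q ∈ L d n (t + 1)) ∨ (q ∈ L d n t ∧ p ∈ L d n (t + 1)))

/-- The edge vector `J_p^u ∈ ℝ^{E_t}`, `J_p^u(pq) = u_p - u_q` on edges of `E_t`
incident to `p`, and `0` otherwise (as a symmetric function of edge endpoints). -/
def Jvec (d n : ℕ) (t : ℤ) (u : V d → ℝ) (p : V d) : V d → V d → ℝ := fun a b =>
  if EdgeT d n t a b then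
    (if a = p then u a - u b else if b = p then u b - u a else 0)
  else 0

/-- Inner product of edge functions. -/
def dotE (d n : ℕ) (f g : V d → V d → ℝ) : ℝ :=
  ∑ p ∈ box d n, ∑ q ∈ box d n, f p q * g p q

/-!
Build a function `w` on `D ∪ ∂D`, vanishing above the layer `t`, harmonic in `D`,
with `w p₀ = 1`, by choosing its values layer by layer downwards. At an interior point `p` one
layer above the current one the Laplacian sees only the `d` lower neighbours `p - eᵢ`, so each
layer has to solve a linear system whose rows are indexed by the points `p` and whose columns
are the points `p - eᵢ`. That system is triangular: some row has a column shared with no other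
row, and this column avoids `p₀`, so the rows can be solved one at a time. Restricting `w` gives
`u ∈ 𝒰^{(t)}` with `u p₀ = 1`. Every edge of `E_t` at `p₀` ends in `L_{t+1}`, where every
`u ∈ 𝒰^{(t)}` vanishes, so `J_{p₀}^u = u p₀ • 1_{ℰ(p₀)}`.
-/

section Lattice

variable {d n : ℕ}

lemma sum1_sub_single (p : V d) (i : Fin d) : sum1 (p - Pi.single i 1) = sum1 p - 1 := by
  simp [sum1, Finset.sum_sub_distrib]

lemma sum1_add_single (p : V d) (i : Fin d) : sum1 (p + Pi.single i 1) = sum1 p + 1 := by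
  simp [sum1, Finset.sum_add_distrib]

lemma dist1_comm (p q : V d) : dist1 p q = dist1 q p := by
  simp only [dist1, abs_sub_comm]

lemma dist1_sub_single (p : V d) (i : Fin d) : dist1 p (p - Pi.single i 1) = 1 := by
  simp [dist1, Pi.single_apply, apply_ite]

lemma abs_sub_le_dist1 (p q : V d) (i : Fin d) : |p i - q i| ≤ dist1 p q :=
  Finset.single_le_sum (f := fun j => |p j - q j|) (fun _ _ => abs_nonneg _) (mem_univ i)

lemma exists_eq_add_single_or_eq_sub_single {p q : V d} (h : dist1 p q = 1) :
    ∃ i, q = p + Pi.single i 1 ∨ q = p - Pi.single i 1 := by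
  obtain ⟨i, hi⟩ : ∃ i, p i ≠ q i := by
    by_contra! hpq
    simp [dist1, hpq] at h
  have hsplit := Finset.add_sum_erase univ (fun j => |p j - q j|) (mem_univ i)
  have hrest : ∑ j ∈ univ.erase i, |p j - q j| = 0 := by
    have := Finset.sum_nonneg (s := univ.erase i) (fun j _ => abs_nonneg (p j - q j))
    have := Int.one_le_abs (sub_ne_zero.mpr hi)
    unfold dist1 at h
    omega
  have hoff : ∀ j ≠ i, q j = p j := fun j hj => by
    have := (Finset.sum_eq_zero_iff_of_nonneg (fun k _ => abs_nonneg (p k - q k))).mp hrest j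
      (by simpa using hj)
    rw [abs_eq_zero] at this
    omega
  have hii : q i = p i + 1 ∨ q i = p i - 1 := by
    unfold dist1 at h
    rw [hrest, h, add_zero] at hsplit
    rcases abs_eq (zero_le_one' ℤ) |>.mp hsplit with h' | h' <;> omega
  refine ⟨i, hii.imp (fun hq => ?_) (fun hq => ?_)⟩ <;> funext j <;> by_cases hj : j = i <;>
    simp [hj, hq, hoff]

lemma mem_box_of_mem_Bset {p : V d} (hp : p ∈ Bset d n) : ∀ i, 0 ≤ p i ∧ p i ≤ (n : ℤ) + 1 := by
  obtain ⟨-, q, hq, hpq⟩ := hp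
  intro i
  have := abs_sub_le_dist1 p q i
  have := hq i
  rw [hpq, abs_le] at *
  omega

lemma exists_eq_zero_or_eq_of_mem_Bset {p : V d} (hp : p ∈ Bset d n) :
    ∃ i, p i = 0 ∨ p i = (n : ℤ) + 1 := by
  obtain ⟨i, hi⟩ : ∃ i, ¬ (1 ≤ p i ∧ p i ≤ (n : ℤ)) := by
    by_contra! h
    exact hp.1 h
  have := mem_box_of_mem_Bset hp i
  exact ⟨i, by omega⟩

lemma mem_box_of_mem_Vset {p : V d} (hp : p ∈ Vset d n) : p ∈ box d n := by
  simp only [box, Fintype.mem_piFinset, Finset.mem_Icc]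
  rcases hp with hp | hp
  · exact fun i => ⟨by linarith [(hp i).1], by linarith [(hp i).2]⟩
  · exact mem_box_of_mem_Bset hp

lemma sub_single_mem_Vset {p : V d} (hp : p ∈ Dset d n) (i : Fin d) :
    p - Pi.single i 1 ∈ Vset d n := by
  by_cases h : p i = 1
  · refine Or.inr ⟨fun hD => ?_, p, hp, by rw [dist1_comm]; exact dist1_sub_single p i⟩
    have := (hD i).1
    simp [h] at this
  · left
    intro j
    have := hp j
    by_cases hj : j = i
    · subst hj; simp; omega
    · simpa [hj] using this

lemma adj_sub_single {p : V d} (hp : p ∈ Dset d n) (i : Fin d) :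
    Adj d n p (p - Pi.single i 1) :=
  ⟨dist1_sub_single p i, Or.inl hp, sub_single_mem_Vset hp i, Or.inl hp⟩

lemma adj_symm {p q : V d} (h : Adj d n p q) : Adj d n q p :=
  ⟨by rw [dist1_comm]; exact h.1, h.2.2.1, h.2.1, h.2.2.2.symm⟩

lemma sum1_of_mem_nbr {p q : V d} (hq : q ∈ nbr d n p) :
    sum1 q = sum1 p + 1 ∨ sum1 q = sum1 p - 1 := by
  obtain ⟨i, rfl | rfl⟩ := exists_eq_add_single_or_eq_sub_single (Finset.mem_filter.mp hq).2.1
  · exact Or.inl (sum1_add_single p i)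
  · exact Or.inr (sum1_sub_single p i)

lemma le_sum1_of_mem_Dset {p : V d} (hp : p ∈ Dset d n) : (d : ℤ) ≤ sum1 p := by
  calc (d : ℤ) = ∑ _i : Fin d, (1 : ℤ) := by simp
    _ ≤ sum1 p := Finset.sum_le_sum fun i _ => (hp i).1

end Lattice

section Laplacian

variable {d n : ℕ} {γ : V d → V d → ℝ}

lemma sub_single_injective (p : V d) : Function.Injective fun i : Fin d => p - Pi.single i 1 := by
  intro i j h
  by_contra hij
  have := congrFun h i
  simp [hij] at this

lemma sum_nbr_eq_sum_sub_single {p : V d} (hp : p ∈ Dset d n) (F g : V d → ℝ)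
    (hg : ∀ q, g q ≠ 0 → sum1 q = sum1 p - 1) :
    ∑ q ∈ nbr d n p, F q * g q = ∑ i : Fin d, F (p - Pi.single i 1) * g (p - Pi.single i 1) := by
  rw [← Finset.sum_image (f := fun q => F q * g q) fun i _ j _ h => sub_single_injective p h]
  refine (Finset.sum_subset ?_ fun q hq hq' => ?_).symm
  · intro q hq
    obtain ⟨i, -, rfl⟩ := Finset.mem_image.mp hq
    exact Finset.mem_filter.mpr
      ⟨mem_box_of_mem_Vset (sub_single_mem_Vset hp i), adj_sub_single hp i⟩
  · by_contra hFg
    obtain ⟨i, rfl | rfl⟩ := exists_eq_add_single_or_eq_sub_single (Finset.mem_filter.mp hq).2.1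
    · have := hg _ (right_ne_zero_of_mul hFg)
      rw [sum1_add_single] at this
      omega
    · exact hq' (Finset.mem_image_of_mem _ (mem_univ i))

lemma lap_add (u v : V d → ℝ) (p : V d) :
    lap d n γ (u + v) p = lap d n γ u p + lap d n γ v p := by
  simp only [lap, ← Finset.sum_add_distrib, Pi.add_apply]
  exact Finset.sum_congr rfl fun _ _ => by ring

lemma lap_eq_zero_of_support_below {u : V d → ℝ} {p : V d}
    (hu : ∀ q, u q ≠ 0 → sum1 q + 1 < sum1 p) : lap d n γ u p = 0 := by
  have hzero : ∀ q, sum1 p ≤ sum1 q + 1 → u q = 0 := fun q hq => by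
    by_contra h
    linarith [hu q h]
  refine Finset.sum_eq_zero fun q hq => ?_
  rw [hzero q (by rcases sum1_of_mem_nbr hq with h | h <;> omega), hzero p (by omega)]
  ring

lemma lap_eq_sum_sub_single {u : V d → ℝ} {p : V d} (hp : p ∈ Dset d n)
    (hu : ∀ q, u q ≠ 0 → sum1 q = sum1 p - 1) :
    lap d n γ u p = ∑ i : Fin d, γ (p - Pi.single i 1) p * u (p - Pi.single i 1) := by
  have hup : u p = 0 := by
    by_contra h
    linarith [hu p h]
  simp only [lap, hup, sub_zero]
  exact sum_nbr_eq_sum_sub_single hp (fun q => γ q p) u hu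

end Laplacian

section LowerSystem

variable {d : ℕ}

def indexWeight (p : V d) : ℤ := ∑ i : Fin d, (i : ℤ) * p i

lemma indexWeight_sub_single (p : V d) (i : Fin d) :
    indexWeight (p - Pi.single i 1) = indexWeight p - i := by
  simp [indexWeight, mul_sub, Finset.sum_sub_distrib, Pi.single_apply]

/-- Take `p` of largest `indexWeight` with `j = 0`, or `p` of smallest `indexWeight` with
`j = d - 1`; both columns equal to `p₀` would force `d - 1 ≤ 0`. -/
lemma exists_private_lower_nbr (hd : 2 ≤ d) {P : Finset (V d)} (hP : P.Nonempty) (p₀ : V d) :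
    ∃ p ∈ P, ∃ j : Fin d, p - Pi.single j 1 ≠ p₀ ∧
      ∀ q ∈ P, ∀ i : Fin d, q - Pi.single i 1 = p - Pi.single j 1 → q = p := by
  obtain ⟨pmax, hmaxP, hmax⟩ := P.exists_max_image indexWeight hP
  obtain ⟨pmin, hminP, hmin⟩ := P.exists_min_image indexWeight hP
  have hw : ∀ {q p : V d} {i j : Fin d}, q - Pi.single i 1 = p - Pi.single j 1 →
      indexWeight q - i = indexWeight p - j := fun h => by
    rw [← indexWeight_sub_single, ← indexWeight_sub_single, h]
  have hcancel : ∀ {q p : V d} {i : Fin d}, q - Pi.single i 1 = p - Pi.single i 1 → q = p :=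
    fun h => sub_left_injective h
  let first : Fin d := ⟨0, by omega⟩
  let last : Fin d := ⟨d - 1, by omega⟩
  by_cases h : pmax - Pi.single first 1 = p₀
  · refine ⟨pmin, hminP, last, fun h' => ?_, fun q hq i hqi => ?_⟩
    · have := hw (h.trans h'.symm)
      have := hmin pmax hmaxP
      simp only [first, last] at *
      omega
    · have hi : i = last := by
        have := hw hqi
        have := hmin q hq
        have := i.2
        ext
        simp only [last] at *
        omega
      subst hi
      exact hcancel hqi
  · refine ⟨pmax, hmaxP, first, h, fun q hq i hqi => ?_⟩
    have hi : i = first := by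
      have := hw hqi
      have := hmax q hq
      ext
      simp only [first] at *
      omega
    subst hi
    exact hcancel hqi

theorem exists_solution_lower_nbr_system (hd : 2 ≤ d) (a : V d → Fin d → ℝ) (p₀ : V d)
    (b₀ : ℝ) (b : V d → ℝ) (P : Finset (V d)) (ha : ∀ p ∈ P, ∀ i, a p i ≠ 0) :
    ∃ x : V d → ℝ, x p₀ = b₀ ∧ ∀ p ∈ P, ∑ i, a p i * x (p - Pi.single i 1) = b p := by
  induction P using Finset.strongInduction with
  | H P ih =>
  rcases P.eq_empty_or_nonempty with rfl | hP
  · exact ⟨fun _ => b₀, rfl, by simp⟩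
  obtain ⟨p, hp, j, hjp₀, hpriv⟩ := exists_private_lower_nbr hd hP p₀
  obtain ⟨x, hx₀, hx⟩ := ih (P.erase p) (Finset.erase_ssubset hp)
    fun q hq => ha q (Finset.mem_of_mem_erase hq)
  set c := (b p - ∑ i ∈ univ.erase j, a p i * x (p - Pi.single i 1)) / a p j with hc
  refine ⟨Function.update x (p - Pi.single j 1) c,
    by rw [Function.update_of_ne hjp₀.symm, hx₀], fun q hq => ?_⟩
  by_cases hqp : q = p
  · subst hqp
    have hrest : ∀ i ∈ univ.erase j, a q i * Function.update x (q - Pi.single j 1) c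
        (q - Pi.single i 1) = a q i * x (q - Pi.single i 1) := fun i hi => by
      rw [Function.update_of_ne ((sub_single_injective q).ne (Finset.ne_of_mem_erase hi))]
    rw [← Finset.add_sum_erase _ _ (mem_univ j), Function.update_self,
      Finset.sum_congr rfl hrest, hc, mul_div_cancel₀ _ (ha q hq j), sub_add_cancel]
  · rw [← hx q (Finset.mem_erase.mpr ⟨hqp, hq⟩)]
    exact Finset.sum_congr rfl fun i _ => by
      rw [Function.update_of_ne fun h => hqp (hpriv q hq i h)]

end LowerSystem

section Harmonic

variable {d n : ℕ} {γ : V d → V d → ℝ}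

lemma exists_layer_solution (hd : 2 ≤ d) (hγ : ∀ p q, Adj d n p q → 0 < γ p q) (s : ℤ)
    (p₀ : V d) (b₀ : ℝ) (b : V d → ℝ) :
    ∃ x : V d → ℝ, (∀ q, x q ≠ 0 → q ∈ Vset d n ∧ sum1 q = s) ∧
      (p₀ ∈ Vset d n → sum1 p₀ = s → x p₀ = b₀) ∧
      ∀ p ∈ Dset d n, sum1 p = s + 1 → lap d n γ x p = b p := by
  set S : Set (V d) := {q | q ∈ Vset d n ∧ sum1 q = s}
  obtain ⟨x, hx₀, hx⟩ := exists_solution_lower_nbr_system hd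
    (fun p i => γ (p - Pi.single i 1) p) p₀ b₀ b
    ((box d n).filter fun p => p ∈ Dset d n ∧ sum1 p = s + 1)
    fun p hp i => (hγ _ _ (adj_symm (adj_sub_single (Finset.mem_filter.mp hp).2.1 i))).ne'
  have hsupp : ∀ q, rst S x q ≠ 0 → q ∈ S := fun q hq => by
    by_contra h
    exact hq (if_neg h)
  refine ⟨rst S x, hsupp, fun h₁ h₂ => (if_pos ⟨h₁, h₂⟩).trans hx₀, fun p hp hps => ?_⟩
  rw [lap_eq_sum_sub_single hp fun q hq => by rw [(hsupp q hq).2, hps]; ring,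
    ← hx p (Finset.mem_filter.mpr ⟨mem_box_of_mem_Vset (Or.inl hp), hp, hps⟩)]
  refine Finset.sum_congr rfl fun i _ => ?_
  rw [rst, if_pos ⟨sub_single_mem_Vset hp i, by rw [sum1_sub_single, hps]; ring⟩]

theorem exists_harmonic_supported_below (hd : 2 ≤ d) (hγ : ∀ p q, Adj d n p q → 0 < γ p q)
    {t : ℤ} (ht : (d : ℤ) - 1 ≤ t) {p₀ : V d} (hp₀ : p₀ ∈ Vset d n) (hp₀t : sum1 p₀ = t) :
    ∃ w : V d → ℝ, (∀ q, w q ≠ 0 → q ∈ Vset d n ∧ sum1 q ≤ t) ∧ w p₀ = 1 ∧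
      ∀ p ∈ Dset d n, lap d n γ w p = 0 := by
  suffices h : ∀ s ≤ t, ∃ w : V d → ℝ, (∀ q, w q ≠ 0 → q ∈ Vset d n ∧ sum1 q ≤ t) ∧
      w p₀ = 1 ∧ ∀ p ∈ Dset d n, s < sum1 p → lap d n γ w p = 0 by
    obtain ⟨w, hw, hwp₀, hlap⟩ := h _ ht
    exact ⟨w, hw, hwp₀, fun p hp => hlap p hp (by linarith [le_sum1_of_mem_Dset hp])⟩
  intro s hs
  induction s, hs using Int.leInductionDown with
  | base =>
    obtain ⟨x, hx, hxp₀, hlap⟩ := exists_layer_solution hd hγ t p₀ 1 0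
    refine ⟨x, fun q hq => ⟨(hx q hq).1, (hx q hq).2.le⟩, hxp₀ hp₀ hp₀t, fun p hp hpt => ?_⟩
    rcases (show sum1 p = t + 1 ∨ t + 1 < sum1 p by omega) with h | h
    · exact hlap p hp h
    · exact lap_eq_zero_of_support_below fun q hq => by rw [(hx q hq).2]; omega
  | pred s hs ih =>
    obtain ⟨w, hw, hwp₀, hlap⟩ := ih
    obtain ⟨x, hx, -, hxlap⟩ :=
      exists_layer_solution hd hγ (s - 1) p₀ 0 fun p => -lap d n γ w p
    have hxp₀ : x p₀ = 0 := by
      by_contra h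
      have := (hx p₀ h).2
      omega
    refine ⟨w + x, fun q hq => ?_, by simp [hwp₀, hxp₀], fun p hp hps => ?_⟩
    · by_cases hwq : w q = 0
      · have := hx q (by simpa [hwq] using hq)
        exact ⟨this.1, by omega⟩
      · exact hw q hwq
    · rw [lap_add]
      rcases (show sum1 p = s ∨ s < sum1 p by omega) with h | h
      · rw [hxlap p hp (by omega)]
        ring
      · rw [hlap p hp h, lap_eq_zero_of_support_below fun q hq => by rw [(hx q hq).2]; omega]
        ring

end Harmonic

section Localized

variable {d n : ℕ} {γ : V d → V d → ℝ} {t : ℤ} {p₀ : V d}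

lemma mem_JS_of_mem_Bset {p : V d} (hp : p ∈ Bset d n) (ht : sum1 p ≤ t) : p ∈ JS d n t := by
  obtain ⟨i, hi | hi⟩ := exists_eq_zero_or_eq_of_mem_Bset hp
  · exact Or.inl ⟨hp, ht, i, hi⟩
  · exact Or.inr ⟨hp, by omega, i, hi⟩

theorem exists_mem_Uset_eq_one (hd : 2 ≤ d) (hγ : ∀ p q, Adj d n p q → 0 < γ p q)
    (ht : (d : ℤ) - 1 ≤ t) (hp₀ : p₀ ∈ L d n t ∨ p₀ ∈ Km d n t) :
    ∃ u ∈ Uset d n γ t, u p₀ = 1 := by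
  have hp₀V : p₀ ∈ Vset d n := hp₀.imp (·.1) (·.1.1)
  have hp₀t : sum1 p₀ = t := hp₀.elim (·.2) (·.1.2)
  have hp₀S : p₀ ∈ LS d n t ∪ JS d n t :=
    hp₀.imp (fun h => ⟨h.1, h.2.le⟩) fun h => Or.inl ⟨h.1.1, h.1.2.le, h.2⟩
  obtain ⟨w, hw, hwp₀, hlap⟩ := exists_harmonic_supported_below hd hγ ht hp₀V hp₀t
  refine ⟨rst (LS d n t ∪ JS d n t) w, ⟨fun p hp => if_neg hp, rst (Bset d n) w, w,
    fun p hp => ?_, ⟨fun p hp => ?_, hlap, fun p hp => (if_pos hp).symm⟩, fun p hp => ?_,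
    fun p hp => if_pos hp⟩, (if_pos hp₀S).trans hwp₀⟩
  · by_cases hB : p ∈ Bset d n
    · rw [rst, if_pos hB]
      by_contra h
      exact hp (mem_JS_of_mem_Bset hB (hw p h).2)
    · exact if_neg hB
  · by_contra h
    exact hp (hw p h).1
  · by_contra h
    have := (hw p h).2
    have := hp.2
    omega

lemma notMem_LS_union_JS_of_mem_L_succ {b : V d} (hb : b ∈ L d n (t + 1)) :
    b ∉ LS d n t ∪ JS d n t := by
  rintro (h | h | h)
  · linarith [hb.2, h.2]
  · exact h.1.1 hb.1
  · exact h.1.1 hb.1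

lemma edgeT_symm {a b : V d} (h : EdgeT d n t a b) : EdgeT d n t b a :=
  ⟨adj_symm h.1, by have := h.2; tauto⟩

lemma mem_L_succ_of_edgeT
    (hp₀ : (p₀ ∈ L d n t ∧ ∀ q ∈ Kp d n (t + 1), ¬ Adj d n p₀ q) ∨ p₀ ∈ Km d n t)
    {b : V d} (he : EdgeT d n t p₀ b) : b ∈ L d n (t + 1) := by
  obtain ⟨hadj, he⟩ := he
  rcases hp₀ with ⟨hL, hK⟩ | hKm
  · rcases he with ⟨h, -⟩ | ⟨-, h⟩ | ⟨-, h⟩ | ⟨-, h⟩ | ⟨-, h⟩ | ⟨-, h⟩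
    · exact absurd hL.1 h.1.1.1
    · linarith [hL.2, h.2]
    · exact absurd hadj (hK b h)
    · exact absurd hL.1 h.1.1.1
    · exact h
    · linarith [hL.2, h.2]
  · rcases he with ⟨-, h⟩ | ⟨-, h⟩ | ⟨h, -⟩ | ⟨-, h⟩ | ⟨h, -⟩ | ⟨-, h⟩
    · exact h
    · exact absurd h.1 hKm.1.1.1
    · exact absurd h.1 hKm.1.1.1
    · linarith [hKm.1.2, h.1.2]
    · exact absurd h.1 hKm.1.1.1
    · exact absurd h.1 hKm.1.1.1

def edgeIndicator (d n : ℕ) (t : ℤ) (p : V d) : V d → V d → ℝ :=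
  fun a b => if EdgeT d n t a b ∧ (a = p ∨ b = p) then 1 else 0

lemma Jvec_eq_smul_edgeIndicator
    (hp₀ : (p₀ ∈ L d n t ∧ ∀ q ∈ Kp d n (t + 1), ¬ Adj d n p₀ q) ∨ p₀ ∈ Km d n t)
    {u : V d → ℝ} (hu : u ∈ Uset d n γ t) :
    Jvec d n t u p₀ = u p₀ • edgeIndicator d n t p₀ := by
  have hzero : ∀ {b}, EdgeT d n t p₀ b → u b = 0 := fun he =>
    hu.1 _ (notMem_LS_union_JS_of_mem_L_succ (mem_L_succ_of_edgeT hp₀ he))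
  funext a b
  simp only [Jvec, edgeIndicator, Pi.smul_apply, smul_eq_mul]
  by_cases he : EdgeT d n t a b
  · by_cases ha : a = p₀
    · subst ha
      simp [he, hzero he]
    · by_cases hb : b = p₀
      · subst hb
        simp [he, ha, hzero (edgeT_symm he)]
      · simp [he, ha, hb]
  · simp [he]

end Localized

theorem stmt16_general (d n : ℕ) (hd : 2 ≤ d)
    (γ : V d → V d → ℝ) (hγ : GoodCond d n γ)
    (t : ℤ) (ht1 : (d : ℤ) - 1 ≤ t)
    (p₀ : V d)
    (hp₀ : (p₀ ∈ L d n t ∧ ∀ q ∈ Kp d n (t + 1), ¬ Adj d n p₀ q) ∨ p₀ ∈ Km d n t) :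
    (∃ u ∈ Uset d n γ t, u p₀ ≠ 0) ∧
    Submodule.span ℝ {f : V d → V d → ℝ | ∃ u ∈ Uset d n γ t, f = Jvec d n t u p₀}
      = Submodule.span ℝ
        ({fun a b => if EdgeT d n t a b ∧ (a = p₀ ∨ b = p₀) then (1 : ℝ) else 0} :
          Set (V d → V d → ℝ)) := by
  obtain ⟨u₀, hu₀, hu₀p₀⟩ := exists_mem_Uset_eq_one hd hγ.2 ht1 (hp₀.imp_left And.left)
  refine ⟨⟨u₀, hu₀, by simp [hu₀p₀]⟩, le_antisymm ?_ ?_⟩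
  · rw [Submodule.span_le]
    rintro _ ⟨u, hu, rfl⟩
    rw [Jvec_eq_smul_edgeIndicator hp₀ hu]
    exact Submodule.smul_mem _ _ (Submodule.subset_span rfl)
  · rw [Submodule.span_le, Set.singleton_subset_iff]
    exact Submodule.subset_span
      ⟨u₀, hu₀, by rw [Jvec_eq_smul_edgeIndicator hp₀ hu₀, hu₀p₀, one_smul]; rfl⟩

/-- for `p₀ ∈ L_t` with no neighbour in `K_{t+1}^+` (or `p₀ ∈ K_t^-`),
there is `u ∈ 𝒰^{(t)}` with `u_{p₀} ≠ 0`, and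
`span{ J_{p₀}^u : u ∈ 𝒰^{(t)} } = span{ 1_{ℰ(p₀)} }`. -/
theorem stmt16 (d n : ℕ) (hd : 2 ≤ d) (hn : 1 ≤ n)
    (γ : V d → V d → ℝ) (hγ : GoodCond d n γ)
    (t : ℤ) (ht1 : (d : ℤ) - 1 ≤ t) (ht2 : t ≤ (d : ℤ) * n - 1)
    (p₀ : V d)
    (hp₀ : (p₀ ∈ L d n t ∧ ∀ q ∈ Kp d n (t + 1), ¬ Adj d n p₀ q) ∨ p₀ ∈ Km d n t) :
    (∃ u ∈ Uset d n γ t, u p₀ ≠ 0) ∧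
    Submodule.span ℝ {f : V d → V d → ℝ | ∃ u ∈ Uset d n γ t, f = Jvec d n t u p₀}
      = Submodule.span ℝ
        ({fun a b => if EdgeT d n t a b ∧ (a = p₀ ∨ b = p₀) then (1 : ℝ) else 0} :
          Set (V d → V d → ℝ)) :=
  stmt16_general d n hd γ hγ t ht1 p₀ hp₀

end DiscreteCalderon
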